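/- Quantitative FMC types are not all inhabited: there exists a computation type τ such that no term M satisfies Γ ⊢_w M : τ for any context Γ with only the specified type assignment; concretely, the type ε ⇒ [ε⇒ε, ε⇒[ε⇒ε]] is uninhabited in the empty context. -/

import Mathlib

/-- Terms of the Functional Machine Calculus. -/
inductive Tm : Type
| var : ℕ → Tm
| pop : ℕ → ℕ → Tm → Tm      -- a<x>.M
| push : Tm → ℕ → Tm → Tm    -- [N]a.M
| skip : Tm
| seq : Tm → Tm → Tm
deriving DecidableEq

open Tm

/-- Free variables. -/
def fv : Tm → Finset ℕ
| Tm.var y => {y}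
| Tm.pop _ y M => (fv M).erase y
| Tm.push N _ M => fv N ∪ fv M
| Tm.skip => ∅
| Tm.seq M N => fv M ∪ fv N

/-- Substitution {N/x}M. -/
def subst (x : ℕ) (N : Tm) : Tm → Tm
| Tm.var y => if y = x then N else Tm.var y
| Tm.pop a y M => if y = x then Tm.pop a y M else Tm.pop a y (subst x N M)
| Tm.push P a M => Tm.push (subst x N P) a (subst x N M)
| Tm.skip => Tm.skip
| Tm.seq M P => Tm.seq (subst x N M) (subst x N P)

/-- A memory: a family of stacks of terms, indexed by locations. -/
abbrev Mem := ℕ → List Tm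

def emptyMem : Mem := fun _ => []

/-- Push a term onto stack `a` of a memory. -/
def pushMem (S : Mem) (a : ℕ) (N : Tm) : Mem := Function.update S a (N :: S a)

/-- Machine states: memory, term, continuation stack. -/
abbrev MState := Mem × Tm × List Tm

/-- Machine transitions. -/
inductive Step : MState → MState → Prop
| push : Step (S, Tm.push N a M, K) (pushMem S a N, M, K)
| pop  : Step (pushMem S a N, Tm.pop a x M, K) (S, subst x N M, K)
| seq  : Step (S, Tm.seq M N, K) (S, M, N :: K)
| skip : Step (S, Tm.skip, M :: K) (S, M, K)

/-- Runs, measured by the number of states traversed (length ≥ 1). -/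
inductive Runs : ℕ → MState → MState → Prop
| single : Runs 1 s s
| step : Step s t → Runs n t u → Runs (n+1) s u

/-- Quantified big-step evaluation. -/
inductive Eval : Mem → Tm → ℕ → Mem → Prop
| skip : Eval S Tm.skip 1 S
| seq : Eval R M m S → Eval S N n T → Eval R (Tm.seq M N) (m+n+1) T
| push : Eval (pushMem S a N) M n T → Eval S (Tm.push N a M) (n+1) T
| pop : Eval S (subst x N M) n T → Eval (pushMem S a N) (Tm.pop a x M) (n+1) T

/-- The six reduction rules. -/
inductive Rule : Tm → Tm → Prop
| beta : Rule (Tm.push N a (Tm.pop a x M)) (subst x N M)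
| passage : a ≠ b → x ∉ fv N →
    Rule (Tm.push N b (Tm.pop a x M)) (Tm.pop a x (Tm.push N b M))
| next : Rule (Tm.seq Tm.skip M) M
| prefixPop : x ∉ fv M → Rule (Tm.seq (Tm.pop a x N) M) (Tm.pop a x (Tm.seq N M))
| prefixPush : Rule (Tm.seq (Tm.push P a N) M) (Tm.push P a (Tm.seq N M))
| assoc : Rule (Tm.seq (Tm.seq P N) M) (Tm.seq P (Tm.seq N M))

/-- The beta rule alone. -/
inductive BetaRule : Tm → Tm → Prop
| beta : BetaRule (Tm.push N a (Tm.pop a x M)) (subst x N M)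

/-- The five non-beta reduction rules. -/
inductive NBRule : Tm → Tm → Prop
| passage : a ≠ b → x ∉ fv N →
    NBRule (Tm.push N b (Tm.pop a x M)) (Tm.pop a x (Tm.push N b M))
| next : NBRule (Tm.seq Tm.skip M) M
| prefixPop : x ∉ fv M → NBRule (Tm.seq (Tm.pop a x N) M) (Tm.pop a x (Tm.seq N M))
| prefixPush : NBRule (Tm.seq (Tm.push P a N) M) (Tm.push P a (Tm.seq N M))
| assoc : NBRule (Tm.seq (Tm.seq P N) M) (Tm.seq P (Tm.seq N M))

/-- Rules flagged by whether they are beta/next (weight-decreasing) steps. -/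
inductive RuleK : Bool → Tm → Tm → Prop
| beta : RuleK true (Tm.push N a (Tm.pop a x M)) (subst x N M)
| next : RuleK true (Tm.seq Tm.skip M) M
| passage : a ≠ b → x ∉ fv N →
    RuleK false (Tm.push N b (Tm.pop a x M)) (Tm.pop a x (Tm.push N b M))
| prefixPop : x ∉ fv M → RuleK false (Tm.seq (Tm.pop a x N) M) (Tm.pop a x (Tm.seq N M))
| prefixPush : RuleK false (Tm.seq (Tm.push P a N) M) (Tm.push P a (Tm.seq N M))
| assoc : RuleK false (Tm.seq (Tm.seq P N) M) (Tm.seq P (Tm.seq N M))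

/-- Closure of a rule relation under all contexts. -/
inductive Clo (r : Tm → Tm → Prop) : Tm → Tm → Prop
| base : r M N → Clo r M N
| pop : Clo r M N → Clo r (Tm.pop a x M) (Tm.pop a x N)
| pushBody : Clo r M N → Clo r (Tm.push P a M) (Tm.push P a N)
| pushArg : Clo r M N → Clo r (Tm.push M a P) (Tm.push N a P)
| seqL : Clo r M N → Clo r (Tm.seq M P) (Tm.seq N P)
| seqR : Clo r M N → Clo r (Tm.seq P M) (Tm.seq P N)

/-- Closure of a rule relation under spine contexts (no argument position). -/
inductive SpineClo (r : Tm → Tm → Prop) : Tm → Tm → Prop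
| base : r M N → SpineClo r M N
| pop : SpineClo r M N → SpineClo r (Tm.pop a x M) (Tm.pop a x N)
| pushBody : SpineClo r M N → SpineClo r (Tm.push P a M) (Tm.push P a N)
| seqL : SpineClo r M N → SpineClo r (Tm.seq M P) (Tm.seq N P)
| seqR : SpineClo r M N → SpineClo r (Tm.seq P M) (Tm.seq P N)

/-- Computation types: implications between memory types; a memory type assigns
to each location a vector (list) of collection types, a collection type being
a finite collection (list, read as multiset) of computation types. -/
inductive Ty : Type
| arr : (ℕ → List (List Ty)) → (ℕ → List (List Ty)) → Ty

abbrev Coll := List Ty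
abbrev MemT := ℕ → List Coll

def emptyMT : MemT := fun _ => []

/-- Prepend collection ι at location a of a memory type. -/
def consAt (a : ℕ) (ι : Coll) (κ : MemT) : MemT :=
  fun b => if b = a then ι :: κ b else κ b

/-- Typing contexts assign collection types to variables. -/
abbrev Ctx := ℕ → Coll

def emptyCtx : Ctx := fun _ => []
def ctxAdd (Γ Δ : Ctx) : Ctx := fun x => Γ x ++ Δ x
def singleCtx (x : ℕ) (ι : Coll) : Ctx := fun y => if y = x then ι else []

mutual
/-- Weak quantitative typing of terms, with weight. -/
inductive WT : Ctx → Tm → Ty → ℕ → Prop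
| var : WT (singleCtx x [t]) (Tm.var x) t 0
| abs : WT Γ M (Ty.arr κ μ) n →
    WT (Function.update Γ x []) (Tm.pop a x M) (Ty.arr (consAt a (Γ x) κ) μ) (n+1)
| app : WTC Γ N ι n → WT Δ M (Ty.arr (consAt a ι κ) μ) m →
    WT (ctxAdd Γ Δ) (Tm.push N a M) (Ty.arr κ μ) (n+m+1)
| unit : WT emptyCtx Tm.skip (Ty.arr ι ι) 1
| seq : WT Γ M (Ty.arr ι κ) n → WT Δ N (Ty.arr κ μ) m →
    WT (ctxAdd Γ Δ) (Tm.seq M N) (Ty.arr ι μ) (n+m+1)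
/-- Weak typing of a term by a collection type (the collection rule). -/
inductive WTC : Ctx → Tm → Coll → ℕ → Prop
| nil : WTC emptyCtx M [] 0
| cons : WT Γ M t n → WTC Δ M ts m → WTC (ctxAdd Γ Δ) M (t :: ts) (n+m)
end

mutual
/-- Strong quantitative typing of terms, with weight. -/
inductive StrT : Ctx → Tm → Ty → ℕ → Prop
| var : StrT (singleCtx x [t]) (Tm.var x) t 0
| abs : StrT Γ M (Ty.arr κ μ) n →
    StrT (Function.update Γ x []) (Tm.pop a x M) (Ty.arr (consAt a (Γ x) κ) μ) (n+1)
| app : StrTC Γ N ι n → StrT Δ M (Ty.arr (consAt a ι κ) μ) m → StrT E N t k →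
    StrT (ctxAdd (ctxAdd Γ Δ) E) (Tm.push N a M) (Ty.arr κ μ) (n+m+k+1)
| unit : StrT emptyCtx Tm.skip (Ty.arr ι ι) 1
| seq : StrT Γ M (Ty.arr ι κ) n → StrT Δ N (Ty.arr κ μ) m →
    StrT (ctxAdd Γ Δ) (Tm.seq M N) (Ty.arr ι μ) (n+m+1)
| weak : StrT Γ M t n → StrT (ctxAdd Γ Δ) M t n
/-- Strong typing of a term by a collection type. -/
inductive StrTC : Ctx → Tm → Coll → ℕ → Prop
| nil : StrTC emptyCtx M [] 0
| cons : StrT Γ M t n → StrTC Δ M ts m → StrTC (ctxAdd Γ Δ) M (t :: ts) (n+m)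
end

/-- Weak typing of a single stack. -/
inductive WStk : List Tm → List Coll → ℕ → Prop
| nil : WStk [] [] 0
| cons : WTC emptyCtx N ν n → WStk S ι m → WStk (N :: S) (ν :: ι) (n+m)

/-- Weak typing of a memory: each stack typed, with finitely-supported weights. -/
def WM (S : Mem) (ι : MemT) (n : ℕ) : Prop :=
  ∃ w : ℕ → ℕ, (∀ a, WStk (S a) (ι a) (w a)) ∧
    ∃ l : Finset ℕ, (∀ a ∉ l, w a = 0) ∧ n = ∑ a ∈ l, w a

/-- Weak typing of a continuation stack. -/
inductive WK : List Tm → Ty → ℕ → Prop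
| nil : WK [] (Ty.arr ι ι) 0
| cons : WT emptyCtx M (Ty.arr ι κ) n → WK K (Ty.arr κ μ) m →
    WK (M :: K) (Ty.arr ι μ) (n+m)

/-- Weak typing of a machine state, with type ε ⇒ μ⃗. -/
inductive WS : MState → MemT → ℕ → Prop
| mk : WM S ι n → WT emptyCtx M (Ty.arr ι κ) m → WK K (Ty.arr κ μ) k →
    WS (S, M, K) μ (n+m+k)

mutual
/-- Spine normal forms W. -/
inductive SpNF : Tm → Prop
| abs : SpNF M → SpNF (Tm.pop a x M)
| ofV : SpNFV M → SpNF M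
/-- Spine normal forms V (those that are not abstractions). -/
inductive SpNFV : Tm → Prop
| push : SpNFV M → SpNFV (Tm.push N a M)
| seq : SpNF M → SpNFV (Tm.seq (Tm.var x) M)
| var : SpNFV (Tm.var x)
| skip : SpNFV Tm.skip
end

mutual
/-- Normal forms of full reduction. -/
inductive NF : Tm → Prop
| abs : NF M → NF (Tm.pop a x M)
| ofV : NFV M → NF M
inductive NFV : Tm → Prop
| push : NF N → NFV M → NFV (Tm.push N a M)
| seq : NF M → NFV (Tm.seq (Tm.var x) M)
| var : NFV (Tm.var x)
| skip : NFV Tm.skip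
end

/-- A weak head context of applications, applied to a term. -/
def apps : List (Tm × ℕ) → Tm → Tm
| [], M => M
| (N, a) :: l, M => Tm.push N a (apps l M)

/-- The memory generated by executing a sequence of pushes. -/
def memOf (l : List (Tm × ℕ)) : Mem :=
  l.foldl (fun S p => pushMem S p.2 p.1) emptyMem

mutual
/-- Perpetual evaluation. -/
inductive Perp : Tm → Tm → Prop
| beta : Perp (apps l (subst x N M)) P → Perp N Q →
    Perp (apps l (Tm.push N a (Tm.pop a x M))) P
| passage : a ≠ b → x ∉ fv N →
    Perp (apps l (Tm.pop a x (Tm.push N b M))) P →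
    Perp (apps l (Tm.push N b (Tm.pop a x M))) P
| next : Perp (apps l M) P → Perp (apps l (Tm.seq Tm.skip M)) P
| prefixPop : x ∉ fv M → Perp (apps l (Tm.pop a x (Tm.seq N M))) P →
    Perp (apps l (Tm.seq (Tm.pop a x N) M)) P
| prefixPush : Perp (apps l (Tm.push Q a (Tm.seq N M))) P →
    Perp (apps l (Tm.seq (Tm.push Q a N) M)) P
| assoc : Perp (apps l (Tm.seq Q (Tm.seq N M))) P →
    Perp (apps l (Tm.seq (Tm.seq Q N) M)) P
| abs : Perp M P → Perp (Tm.pop a x M) (Tm.pop a x P)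
| unit : PerpL l l' → Perp (apps l Tm.skip) (apps l' Tm.skip)
| var : PerpL l l' → Perp (apps l (Tm.var x)) (apps l' (Tm.var x))
| seqvar : PerpL l l' → Perp M P →
    Perp (apps l (Tm.seq (Tm.var x) M)) (apps l' (Tm.seq (Tm.var x) P))
/-- Pointwise perpetual evaluation of weak head contexts. -/
inductive PerpL : List (Tm × ℕ) → List (Tm × ℕ) → Prop
| nil : PerpL [] []
| cons : Perp N P → PerpL l l' → PerpL ((N, a) :: l) ((P, a) :: l')
end

/-- Memories of dimension d (over a finite set of locations A). -/
def MemDim (A : Finset ℕ) : ℕ → Mem → Prop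
| 0 => fun S => ∀ a ∉ A, S a = []
| d+1 => fun S => (∀ a ∉ A, S a = []) ∧
    ∀ a ∈ A, d + 1 ≤ (S a).length ∧
      ∀ N ∈ S a, ∃ l, N = apps l Tm.skip ∧ MemDim A d (memOf l)

/-- Terms of dimension d: a sequence of pushes ending in skip generating a
memory of dimension d. -/
def TmDim (A : Finset ℕ) (d : ℕ) (M : Tm) : Prop :=
  ∃ l, M = apps l Tm.skip ∧ MemDim A d (memOf l)

/-- Simultaneous substitution by a substitution map. -/
def msubst (σ : ℕ → Tm) : Tm → Tm
| Tm.var y => σ y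
| Tm.pop a y M => Tm.pop a y (msubst (Function.update σ y (Tm.var y)) M)
| Tm.push N a M => Tm.push (msubst σ N) a (msubst σ M)
| Tm.skip => Tm.skip
| Tm.seq M N => Tm.seq (msubst σ M) (msubst σ N)
/-- The computation type ε ⇒ ε. -/
def tyE : Ty := Ty.arr emptyMT emptyMT

/-- The computation type ε ⇒ [ε⇒ε] (output: singleton collection at the
default location 0). -/
def tyE2 : Ty := Ty.arr emptyMT (fun a => if a = 0 then [[tyE]] else [])

/-- The uninhabited type ε ⇒ [ε⇒ε, ε⇒[ε⇒ε]]. -/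
def tyUninhabited : Ty :=
  Ty.arr emptyMT (fun a => if a = 0 then [[tyE, tyE2]] else [])


/-! Typing is sound for the big-step machine: a closed term of type `ι ⇒ κ`, run from a memory
of type `ι`, evaluates to a memory of type `κ`, and the weight of the final memory plus the
number of steps equals the total initial weight. Termination comes from this weight, which the
substitution lemma shows is conserved when a popped argument is substituted into the body.

A closed term of type `ε ⇒ [ε⇒ε, ε⇒[ε⇒ε]]` leaves in location `0` a single term `N` of both types
`ε ⇒ ε` and `ε ⇒ [ε⇒ε]`. Run from the empty memory, `N` would then end, evaluation being
deterministic, in one memory whose location `0` is both empty and not. -/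
open Function

lemma ctxAdd_eq_emptyCtx {Γ Δ : Ctx} :
    ctxAdd Γ Δ = emptyCtx ↔ Γ = emptyCtx ∧ Δ = emptyCtx := by
  simp only [funext_iff, ctxAdd, emptyCtx, List.append_eq_nil_iff, forall_and]

lemma update_ctxAdd (Γ Δ : Ctx) (x : ℕ) :
    update (ctxAdd Γ Δ) x [] = ctxAdd (update Γ x []) (update Δ x []) := by
  funext y
  by_cases hy : y = x <;> simp [ctxAdd, hy]

lemma update_emptyCtx (x : ℕ) : update emptyCtx x [] = emptyCtx :=
  update_eq_self x emptyCtx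

lemma WTC.nil_inv {Γ : Ctx} {M : Tm} {n : ℕ} (h : WTC Γ M [] n) :
    Γ = emptyCtx ∧ n = 0 := by
  cases h; exact ⟨rfl, rfl⟩

lemma WTC.cons_inv_emptyCtx {M : Tm} {t : Ty} {ts : Coll} {n : ℕ}
    (h : WTC emptyCtx M (t :: ts) n) :
    ∃ n₁ n₂, n = n₁ + n₂ ∧ WT emptyCtx M t n₁ ∧ WTC emptyCtx M ts n₂ := by
  generalize hΓ : emptyCtx = Γ at h
  cases h with
  | cons h₁ h₂ =>
    obtain ⟨rfl, rfl⟩ := ctxAdd_eq_emptyCtx.mp hΓ.symm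
    exact ⟨_, _, rfl, h₁, h₂⟩

lemma WTC.append_inv_emptyCtx {M : Tm} {ι₁ ι₂ : Coll} {n : ℕ}
    (h : WTC emptyCtx M (ι₁ ++ ι₂) n) :
    ∃ n₁ n₂, n = n₁ + n₂ ∧ WTC emptyCtx M ι₁ n₁ ∧ WTC emptyCtx M ι₂ n₂ := by
  induction ι₁ generalizing n with
  | nil => exact ⟨0, n, (Nat.zero_add n).symm, WTC.nil, h⟩
  | cons t ts ih =>
    obtain ⟨n₁, n₂, rfl, h₁, h₂⟩ := h.cons_inv_emptyCtx
    obtain ⟨n₃, n₄, rfl, h₃, h₄⟩ := ih h₂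
    have hΓ : ctxAdd emptyCtx emptyCtx = emptyCtx := ctxAdd_eq_emptyCtx.mpr ⟨rfl, rfl⟩
    exact ⟨n₁ + n₃, n₄, (Nat.add_assoc _ _ _).symm, hΓ ▸ WTC.cons h₁ h₃, h₄⟩

mutual

theorem WT.substitution {Γ : Ctx} {M : Tm} {t : Ty} {n : ℕ} (h : WT Γ M t n)
    {x : ℕ} {N : Tm} {m : ℕ} (hN : WTC emptyCtx N (Γ x) m) :
    WT (update Γ x []) (subst x N M) t (n + m) := by
  cases h with
  | @var y =>
    by_cases hxy : y = x
    · subst hxy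
      obtain ⟨m₁, m₂, rfl, hN₁, hN₂⟩ := WTC.cons_inv_emptyCtx (by simpa [singleCtx] using hN)
      obtain ⟨-, rfl⟩ := hN₂.nil_inv
      convert hN₁ using 1
      · funext z; by_cases hz : z = y <;> simp [singleCtx, emptyCtx, hz]
      · simp [subst]
      · omega
    · obtain ⟨-, rfl⟩ := WTC.nil_inv (by simpa [singleCtx, Ne.symm hxy] using hN)
      convert WT.var (x := y) (t := t) using 1
      · exact update_eq_self_iff.mpr (by simp [singleCtx, Ne.symm hxy])
      · simp [subst, hxy]
  | @abs Γ₀ M₀ _ _ _ y a h₀ =>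
    by_cases hxy : y = x
    · subst hxy
      obtain ⟨-, rfl⟩ := WTC.nil_inv (by simpa using hN)
      simpa [subst] using WT.abs (a := a) (x := y) h₀
    · rw [show subst x N (Tm.pop a y M₀) = Tm.pop a y (subst x N M₀) by simp [subst, hxy]]
      have hN₀ : WTC emptyCtx N (Γ₀ x) m := by rwa [update_of_ne (Ne.symm hxy)] at hN
      convert WT.abs (a := a) (x := y) (WT.substitution h₀ hN₀) using 1
      · exact update_comm hxy _ _ _
      · rw [update_of_ne hxy]
      · omega
  | app hP hM =>
    obtain ⟨m₁, m₂, rfl, hN₁, hN₂⟩ := WTC.append_inv_emptyCtx hN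
    simp only [subst]
    convert WT.app (WTC.substitution hP hN₁) (WT.substitution hM hN₂) using 1
    · exact update_ctxAdd _ _ _
    · omega
  | unit =>
    obtain ⟨-, rfl⟩ := hN.nil_inv
    simpa [update_emptyCtx, subst] using WT.unit
  | seq h₁ h₂ =>
    obtain ⟨m₁, m₂, rfl, hN₁, hN₂⟩ := WTC.append_inv_emptyCtx hN
    simp only [subst]
    convert WT.seq (WT.substitution h₁ hN₁) (WT.substitution h₂ hN₂) using 1
    · exact update_ctxAdd _ _ _
    · omega

theorem WTC.substitution {Γ : Ctx} {M : Tm} {ι : Coll} {n : ℕ} (h : WTC Γ M ι n)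
    {x : ℕ} {N : Tm} {m : ℕ} (hN : WTC emptyCtx N (Γ x) m) :
    WTC (update Γ x []) (subst x N M) ι (n + m) := by
  cases h with
  | nil =>
    obtain ⟨-, rfl⟩ := hN.nil_inv
    simpa [update_emptyCtx] using WTC.nil
  | cons h₁ h₂ =>
    obtain ⟨m₁, m₂, rfl, hN₁, hN₂⟩ := WTC.append_inv_emptyCtx hN
    convert WTC.cons (WT.substitution h₁ hN₁) (WTC.substitution h₂ hN₂) using 1
    · exact update_ctxAdd _ _ _
    · omega

end

lemma WStk.cons_inv {L : List Tm} {ν : Coll} {ι : List Coll} {n : ℕ}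
    (h : WStk L (ν :: ι) n) :
    ∃ N L' q r, L = N :: L' ∧ WTC emptyCtx N ν q ∧ WStk L' ι r ∧ n = q + r := by
  cases h with
  | cons h₁ h₂ => exact ⟨_, _, _, _, rfl, h₁, h₂, rfl⟩

lemma WStk.eq_nil {L : List Tm} {n : ℕ} (h : WStk L [] n) : L = [] := by
  cases h; rfl

lemma wm_iff_finsupp {S : Mem} {ι : MemT} {n : ℕ} :
    WM S ι n ↔ ∃ w : ℕ →₀ ℕ, (∀ a, WStk (S a) (ι a) (w a)) ∧ n = w.degree := by
  constructor
  · rintro ⟨w, hw, l, hl, rfl⟩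
    refine ⟨Finsupp.onFinset l w fun a ha => by_contra fun hal => ha (hl a hal), hw, ?_⟩
    exact (Finsupp.onFinset_sum (g := fun _ k => k) _ fun _ => rfl).symm
  · rintro ⟨w, hw, rfl⟩
    exact ⟨w, hw, w.support, fun a ha => Finsupp.notMem_support_iff.mp ha, rfl⟩

lemma WM.empty : WM emptyMem emptyMT 0 :=
  wm_iff_finsupp.mpr ⟨0, fun _ => WStk.nil, rfl⟩

lemma WM.push {S : Mem} {ι : MemT} {p : ℕ} (hS : WM S ι p) {a : ℕ} {N : Tm} {ν : Coll}
    {q : ℕ} (hN : WTC emptyCtx N ν q) : WM (pushMem S a N) (consAt a ν ι) (p + q) := by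
  obtain ⟨w, hw, rfl⟩ := wm_iff_finsupp.mp hS
  refine wm_iff_finsupp.mpr ⟨w + Finsupp.single a q, fun b => ?_, by simp⟩
  by_cases hb : b = a
  · subst hb
    simpa [pushMem, consAt, add_comm] using WStk.cons hN (hw b)
  · simpa [pushMem, consAt, hb, Finsupp.single_apply, Ne.symm hb] using hw b

lemma WM.pop {S : Mem} {ι : MemT} {p a : ℕ} {ν : Coll} {ρ : List Coll} (hS : WM S ι p)
    (hι : ι a = ν :: ρ) :
    ∃ N L q r, S a = N :: L ∧ WTC emptyCtx N ν q ∧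
      WM (update S a L) (update ι a ρ) r ∧ p = q + r := by
  obtain ⟨w, hw, rfl⟩ := wm_iff_finsupp.mp hS
  obtain ⟨N, L, q, r, hSa, hN, hL, hwa⟩ := WStk.cons_inv (hι ▸ hw a)
  have hsplit : w = w.update a r + Finsupp.single a q := by
    ext b
    by_cases hb : b = a
    · subst hb; simp [hwa, add_comm]
    · simp [hb]
  refine ⟨N, L, q, (w.update a r).degree, hSa, hN, wm_iff_finsupp.mpr ⟨_, fun b => ?_, rfl⟩, ?_⟩
  · by_cases hb : b = a
    · subst hb; simpa using hL
    · simpa [hb, Finsupp.update_apply] using hw b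
  · conv_lhs => rw [hsplit]
    simp [add_comm]

lemma pushMem_injective {S S' : Mem} {a : ℕ} {N N' : Tm}
    (h : pushMem S a N = pushMem S' a N') :
    N = N' ∧ S = S' := by
  have ha := congrFun h a
  simp only [pushMem, update_self, List.cons.injEq] at ha
  refine ⟨ha.1, funext fun b => ?_⟩
  by_cases hb : b = a
  · subst hb; exact ha.2
  · simpa [pushMem, hb] using congrFun h b

lemma eq_pushMem_of_eq_cons {S : Mem} {a : ℕ} {N : Tm} {L : List Tm} (h : S a = N :: L) :
    S = pushMem (update S a L) a N := by
  funext b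
  by_cases hb : b = a
  · subst hb; simp [pushMem, h]
  · simp [pushMem, hb]

lemma Eval.one_le {S T : Mem} {M : Tm} {k : ℕ} (h : Eval S M k T) : 1 ≤ k := by
  cases h <;> omega

lemma Eval.pop_inv {S₀ T : Mem} {a x k : ℕ} {M : Tm} (h : Eval S₀ (Tm.pop a x M) k T) :
    ∃ S N n, S₀ = pushMem S a N ∧ Eval S (subst x N M) n T := by
  cases h with
  | pop h => exact ⟨_, _, _, rfl, h⟩

theorem Eval.det {S T T' : Mem} {M : Tm} {k k' : ℕ} (h : Eval S M k T)
    (h' : Eval S M k' T') : T = T' := by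
  induction h generalizing k' T' with
  | skip => cases h'; rfl
  | seq _ _ ih₁ ih₂ =>
    cases h' with
    | seq h₁ h₂ => cases ih₁ h₁; exact ih₂ h₂
  | push _ ih =>
    cases h' with
    | push h => exact ih h
  | pop _ ih =>
    obtain ⟨S', N', n', hS, h⟩ := h'.pop_inv
    obtain ⟨rfl, rfl⟩ := pushMem_injective hS
    exact ih h

lemma consAt_update_self (a : ℕ) (ν : Coll) (κ : MemT) :
    update (consAt a ν κ) a (κ a) = κ := by
  funext b
  by_cases hb : b = a
  · subst hb; simp
  · simp [consAt, hb]

theorem WT.eval_of_wm {M : Tm} {ι κ : MemT} {m : ℕ} (hM : WT emptyCtx M (Ty.arr ι κ) m)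
    {S : Mem} {p : ℕ} (hS : WM S ι p) :
    ∃ T q k, Eval S M k T ∧ WM T κ q ∧ q + k = p + m := by
  induction hW : p + m using Nat.strong_induction_on generalizing M ι κ m S p with
  | _ W ih =>
  generalize hΓ : emptyCtx = Γ at hM
  cases hM with
  | @var x =>
    simpa [singleCtx, emptyCtx] using congrFun hΓ x
  | @abs Γ₀ M₀ κ₀ _ n₀ x a h₀ =>
    obtain ⟨N, L, q, r, hSa, hN, hS', rfl⟩ :=
      hS.pop (a := a) (ν := Γ₀ x) (ρ := κ₀ a) (by simp [consAt])
    rw [consAt_update_self] at hS'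
    have hsub : WT emptyCtx (subst x N M₀) (Ty.arr κ₀ κ) (n₀ + q) := hΓ ▸ h₀.substitution hN
    obtain ⟨T, q', k, hEv, hT, hsum⟩ := ih _ (by omega) hsub hS' rfl
    refine ⟨T, q', k + 1, ?_, hT, by omega⟩
    rw [eq_pushMem_of_eq_cons hSa]
    exact Eval.pop hEv
  | app hN hM₀ =>
    obtain ⟨rfl, rfl⟩ := ctxAdd_eq_emptyCtx.mp hΓ.symm
    obtain ⟨T, q, k, hEv, hT, hsum⟩ := ih _ (by omega) hM₀ (hS.push hN) rfl
    exact ⟨T, q, k + 1, Eval.push hEv, hT, by omega⟩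
  | unit => exact ⟨S, p, 1, Eval.skip, hS, hW⟩
  | seq h₁ h₂ =>
    obtain ⟨rfl, rfl⟩ := ctxAdd_eq_emptyCtx.mp hΓ.symm
    obtain ⟨T₁, q₁, k₁, hEv₁, hT₁, hsum₁⟩ := ih _ (by omega) h₁ hS rfl
    have hk₁ := hEv₁.one_le
    obtain ⟨T, q, k₂, hEv₂, hT, hsum₂⟩ := ih _ (by omega) h₂ hT₁ rfl
    exact ⟨T, q, k₁ + k₂ + 1, Eval.seq hEv₁ hEv₂, hT, by omega⟩

lemma WM.eq_nil {S : Mem} {ι : MemT} {n a : ℕ} (hS : WM S ι n) (ha : ι a = []) :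
    S a = [] := by
  obtain ⟨w, hw, -⟩ := hS
  exact (ha ▸ hw a).eq_nil

lemma WT.not_tyE2_of_tyE {N : Tm} {m m' : ℕ} (h : WT emptyCtx N tyE m) :
    ¬ WT emptyCtx N tyE2 m' := by
  intro h'
  obtain ⟨T, _, _, hEv, hT, -⟩ := WT.eval_of_wm h WM.empty
  obtain ⟨T', _, _, hEv', hT', -⟩ := WT.eval_of_wm h' WM.empty
  obtain ⟨_, _, _, _, hT'₀, -⟩ := WM.pop hT' (a := 0) (ν := [tyE]) (ρ := []) (by simp)
  have hT₀ : T 0 = [] := hT.eq_nil rfl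
  rw [hEv.det hEv', hT'₀] at hT₀
  exact List.cons_ne_nil _ _ hT₀

/-- Not all quantitative types are inhabited: the type
ε ⇒ [ε⇒ε, ε⇒[ε⇒ε]] has no inhabitant in the empty context. -/
theorem no_type_inhabitation :
    ∀ (M : Tm) (n : ℕ), ¬ WT emptyCtx M tyUninhabited n := by
  intro M n hM
  obtain ⟨T, _, _, -, hT, -⟩ := WT.eval_of_wm hM WM.empty
  obtain ⟨N, _, _, _, -, hN, -⟩ := WM.pop hT (a := 0) (ν := [tyE, tyE2]) (ρ := []) (by simp)
  obtain ⟨_, _, -, hE, hN'⟩ := hN.cons_inv_emptyCtx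
  obtain ⟨_, _, -, hE2, -⟩ := hN'.cons_inv_emptyCtx
  exact hE.not_tyE2_of_tyE hE2
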